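/- Let p > 1 be an odd integer and q an even integer with 0 < |q| < p and gcd(p,q) = 1. Then the Laurent polynomial Δ(t) = 1 + ∑_{i=1}^{p−1} (−1)^i t^{d(i)}, with d(i) = ∑_{k=1}^{i} (−1)^⌊kq/p⌋, is not reciprocal: there exist no ε ∈ {±1} and n ∈ ℤ such that Δ(t^{−1}) = ε·t^n·Δ(t). -/

import Mathlib

/-!
Since every `ε_k` is odd, `d(i) ≡ i (mod 2)`, so the coefficient `a_k` of `Δ` is `(-1)^k` times
the number of `i ∈ [0, p-1]` with `d(i) = k`. A symmetry `a_{-m} = ±a_{m-n}` therefore makes the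
multiset `{d(0), …, d(p-1)}` invariant under `k ↦ -n - k`, which forces `2 ∑ d(i) = -n p ≡ 0 (mod p)`.

On the other hand `∑ d(i) ≡ -∑ k ε_k (mod p)`. For `p` odd and `q` even, `⌊kq/p⌋` and `kq mod p`
have the same parity, so `ε_k = (-1)^(kq mod p)`; as `k ↦ kq mod p` permutes `[1, p-1]`, this gives
`q ∑ k ε_k ≡ ∑_{r=1}^{p-1} (-1)^r r = (p-1)/2`. Hence `2q ∑ d(i) ≡ 1 (mod p)`, a contradiction.
-/

open Finset

/-- ε_i = (−1)^⌊iq/p⌋ -/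
def eps (p q i : ℤ) : ℤ := ((-1 : ℤˣ) ^ ⌊(i * q : ℚ) / (p : ℚ)⌋ : ℤˣ)

/-- d(i) = ∑_{k=1}^{i} ε_k -/
noncomputable def dd (p q i : ℤ) : ℤ := ∑ k ∈ Finset.Icc 1 i, eps p q k

/-- The coefficient of t^k in Δ(t) = 1 + ∑_{i=1}^{p−1} (−1)^i t^{d(i)}. -/
noncomputable def aC (p q k : ℤ) : ℤ :=
  ∑ i ∈ Finset.Icc (0 : ℤ) (p - 1), if dd p q i = k then (((-1 : ℤˣ) ^ i : ℤˣ) : ℤ) else 0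

theorem Multiset.two_mul_sum_eq_of_count_sub_eq {m : Multiset ℤ} {c : ℤ}
    (h : ∀ k, m.count (c - k) = m.count k) : 2 * m.sum = c * card m := by
  have hmap : m.map (c - ·) = m := by
    ext k
    conv_lhs => rw [← sub_sub_cancel c k]
    rw [Multiset.count_map_eq_count' _ _ sub_right_injective, h]
  have : m.sum = c * card m - m.sum := by
    conv_lhs => rw [← hmap]
    rw [Multiset.sum_map_sub, Multiset.map_const', Multiset.sum_replicate, Multiset.map_id',
      nsmul_eq_mul, mul_comm]
  linarith

theorem Int.mul_emod_mul_emod_of_modEq_one {p c c' k : ℤ} (hcc' : c * c' ≡ 1 [ZMOD p])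
    (hk : k ∈ Icc 1 (p - 1)) : k * c % p * c' % p = k := by
  rw [mem_Icc] at hk
  have : k * c % p * c' ≡ k [ZMOD p] := calc
    k * c % p * c' ≡ k * c * c' [ZMOD p] := (Int.mod_modEq _ _).mul_right _
    _ = k * (c * c') := by ring
    _ ≡ k * 1 [ZMOD p] := hcc'.mul_left _
    _ = k := mul_one k
  rw [this, Int.emod_eq_of_lt (by omega) (by omega)]

theorem Int.mul_emod_mem_Icc_of_modEq_one {p c c' k : ℤ} (hcc' : c * c' ≡ 1 [ZMOD p])
    (hk : k ∈ Icc 1 (p - 1)) : k * c % p ∈ Icc 1 (p - 1) := by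
  have hk' := Int.mul_emod_mul_emod_of_modEq_one hcc' hk
  rw [mem_Icc] at hk ⊢
  have h0 : 0 ≤ k * c % p := Int.emod_nonneg _ (by omega)
  have hlt : k * c % p < p := Int.emod_lt_of_pos _ (by omega)
  have hne : k * c % p ≠ 0 := fun h => by rw [h, zero_mul, Int.zero_emod] at hk'; omega
  omega

theorem Int.sum_Icc_mul_emod_eq {M : Type*} [AddCommMonoid M] {p c : ℤ} (hcop : IsCoprime p c)
    (f : ℤ → M) : ∑ k ∈ Icc 1 (p - 1), f (k * c % p) = ∑ k ∈ Icc 1 (p - 1), f k := by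
  obtain ⟨a, b, hab⟩ := hcop
  have hcb : c * b ≡ 1 [ZMOD p] := Int.modEq_iff_dvd.2 ⟨a, by linear_combination -hab⟩
  have hbc : b * c ≡ 1 [ZMOD p] := mul_comm b c ▸ hcb
  exact sum_nbij' (· * c % p) (· * b % p)
    (fun _ => Int.mul_emod_mem_Icc_of_modEq_one hcb)
    (fun _ => Int.mul_emod_mem_Icc_of_modEq_one hbc)
    (fun _ => Int.mul_emod_mul_emod_of_modEq_one hcb)
    (fun _ => Int.mul_emod_mul_emod_of_modEq_one hbc)
    (fun _ _ => rfl)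

theorem Int.four_mul_sum_Icc_mul_negOnePow {N : ℤ} (hN : 0 ≤ N) :
    4 * ∑ r ∈ Icc 1 N, r * r.negOnePow = (2 * N + 1) * N.negOnePow - 1 := by
  induction N, hN using Int.leInduction with
  | base => simp
  | succ N hN ih =>
    rw [← insert_Icc_right_eq_Icc_add_one (by omega), sum_insert (by simp), mul_add, ih,
      Int.negOnePow_succ]
    push_cast
    ring

theorem dd_succ (p q : ℤ) {i : ℤ} (hi : 0 ≤ i) :
    dd p q (i + 1) = dd p q i + eps p q (i + 1) := by
  rw [dd, ← insert_Icc_right_eq_Icc_add_one (by omega), sum_insert (by simp), add_comm, dd]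

theorem odd_eps (p q k : ℤ) : Odd (eps p q k) := by
  rcases Int.units_eq_one_or ((-1 : ℤˣ) ^ ⌊(k * q : ℚ) / (p : ℚ)⌋) with h | h <;> simp [eps, h]

theorem negOnePow_dd (p q : ℤ) {i : ℤ} (hi : 0 ≤ i) : (dd p q i).negOnePow = i.negOnePow := by
  induction i, hi using Int.leInduction with
  | base => simp [dd]
  | succ i hi ih =>
    rw [dd_succ p q hi, Int.negOnePow_add, ih, Int.negOnePow_odd _ (odd_eps p q _),
      Int.negOnePow_succ, mul_neg_one]

theorem sum_dd_Icc (p q N : ℤ) :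
    ∑ i ∈ Icc 0 N, dd p q i = ∑ k ∈ Icc 1 N, (N + 1 - k) * eps p q k := by
  simp only [dd]
  rw [sum_comm' (t' := Icc 1 N) (s' := fun k => Icc k N)
    (fun i k => by simp only [mem_Icc]; omega)]
  refine sum_congr rfl fun k hk => ?_
  rw [mem_Icc] at hk
  rw [sum_const, Int.card_Icc, nsmul_eq_mul, Int.toNat_of_nonneg (by omega)]

theorem eps_eq_negOnePow_emod {p q : ℤ} (hp : 0 < p) (hpodd : Odd p) (hqeven : Even q) (k : ℤ) :
    eps p q k = ((k * q % p).negOnePow : ℤ) := by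
  have hfloor : ⌊(k * q : ℚ) / (p : ℚ)⌋ = k * q / p := by
    rw [Int.floor_div_cast_of_nonneg hp.le, ← Int.cast_mul, Int.floor_intCast]
  obtain ⟨a, rfl⟩ := hpodd
  obtain ⟨b, rfl⟩ := hqeven
  rw [eps, hfloor, ← Int.negOnePow_def]
  congr 1
  rw [Int.negOnePow_eq_iff, Int.emod_def]
  exact ⟨(a + 1) * (k * (b + b) / (2 * a + 1)) - k * b, by ring⟩

noncomputable def ddValues (p q : ℤ) : Multiset ℤ := (Icc 0 (p - 1)).val.map (dd p q)

theorem aC_eq_negOnePow_mul_count (p q k : ℤ) :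
    aC p q k = k.negOnePow * (ddValues p q).count k := by
  have hsign : ∀ i ∈ (Icc 0 (p - 1)).filter (dd p q · = k), (i.negOnePow : ℤ) = k.negOnePow := by
    intro i hi
    rw [mem_filter, mem_Icc] at hi
    rw [← hi.2, negOnePow_dd p q hi.1.1]
  change (∑ i ∈ Icc 0 (p - 1), if dd p q i = k then (i.negOnePow : ℤ) else 0) = _
  rw [← sum_filter, sum_congr rfl hsign, sum_const, nsmul_eq_mul, mul_comm, ddValues,
    Multiset.count_map, ← Finset.filter_val, Finset.card_val]
  simp only [eq_comm]

theorem abs_aC (p q k : ℤ) : |aC p q k| = (ddValues p q).count k := by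
  rw [aC_eq_negOnePow_mul_count, abs_mul, Int.abs_negOnePow, one_mul, Nat.abs_cast]

theorem two_mul_sum_dd_eq_of_reciprocal {p q ε n : ℤ} (hp : 0 ≤ p) (hε : ε = 1 ∨ ε = -1)
    (hrec : ∀ m, aC p q (-m) = ε * aC p q (m - n)) :
    2 * ∑ i ∈ Icc 0 (p - 1), dd p q i = -n * p := by
  have hsymm : ∀ k, (ddValues p q).count (-n - k) = (ddValues p q).count k := by
    intro k
    have h := congrArg abs (hrec (n + k))
    rw [abs_mul, show n + k - n = k by ring, neg_add', abs_aC, abs_aC] at h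
    rcases hε with rfl | rfl <;> simpa using h
  have h := Multiset.two_mul_sum_eq_of_count_sub_eq hsymm
  rw [ddValues, Multiset.card_map, Finset.card_val, Int.card_Icc, sub_add_cancel, sub_zero,
    Int.toNat_of_nonneg hp] at h
  exact h

theorem two_mul_mul_sum_dd_modEq_one {p q : ℤ} (hp : 1 < p) (hpodd : Odd p) (hqeven : Even q)
    (hcop : IsCoprime p q) : 2 * q * ∑ i ∈ Icc 0 (p - 1), dd p q i ≡ 1 [ZMOD p] := by
  set U := ∑ k ∈ Icc 1 (p - 1), k * eps p q k
  set S := ∑ r ∈ Icc 1 (p - 1), r * r.negOnePow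
  have hT : ∑ i ∈ Icc 0 (p - 1), dd p q i = p * dd p q (p - 1) - U := by
    rw [sum_dd_Icc, dd, mul_sum, ← sum_sub_distrib]
    exact sum_congr rfl fun k _ => by ring
  have hqU : q * U ≡ S [ZMOD p] := calc
    q * U = ∑ k ∈ Icc 1 (p - 1), k * q * eps p q k := by
      rw [mul_sum]; exact sum_congr rfl fun k _ => by ring
    _ ≡ ∑ k ∈ Icc 1 (p - 1), k * q % p * (k * q % p).negOnePow [ZMOD p] :=
      Int.ModEq.sum fun k _ => by
        rw [eps_eq_negOnePow_emod (by omega) hpodd hqeven]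
        exact (Int.mod_modEq _ _).symm.mul_right _
    _ = S := Int.sum_Icc_mul_emod_eq hcop fun r => r * r.negOnePow
  have hS : 2 * S = p - 1 := by
    have h := Int.four_mul_sum_Icc_mul_negOnePow (N := p - 1) (by omega)
    rw [Int.negOnePow_even _ (hpodd.sub_odd odd_one)] at h
    push_cast at h
    linarith
  calc 2 * q * ∑ i ∈ Icc 0 (p - 1), dd p q i = p * (2 * q * dd p q (p - 1)) + -2 * (q * U) := by
        rw [hT]; ring
    _ ≡ 0 + -2 * S [ZMOD p] :=
        (Int.modEq_zero_iff_dvd.2 (dvd_mul_right _ _)).add (hqU.mul_left _)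
    _ = 1 + p * -1 := by linarith
    _ ≡ 1 [ZMOD p] := Int.add_mul_emod_self_left _ _ _

/-- `Δ(t⁻¹) = ε tⁿ Δ(t)`, compared coefficientwise. -/
theorem stmt19_general (p q : ℤ) (hp : 1 < p) (hpodd : Odd p) (hqeven : Even q)
    (hcop : IsCoprime p q) :
    ¬ ∃ (ε n : ℤ), (ε = 1 ∨ ε = -1) ∧ ∀ m : ℤ, aC p q (-m) = ε * aC p q (m - n) := by
  rintro ⟨ε, n, hε, hrec⟩
  have hsum := two_mul_sum_dd_eq_of_reciprocal (by omega) hε hrec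
  have hmod := two_mul_mul_sum_dd_modEq_one hp hpodd hqeven hcop
  have hzero : 2 * q * ∑ i ∈ Icc 0 (p - 1), dd p q i ≡ 0 [ZMOD p] :=
    Int.modEq_zero_iff_dvd.2 ⟨-n * q, by linear_combination q * hsum⟩
  have := Int.le_of_dvd one_pos (Int.modEq_zero_iff_dvd.1 (hmod.symm.trans hzero))
  omega

/-- Δ is not reciprocal: no ε = ±1 and n ∈ ℤ satisfy Δ(t^{-1}) = ε·tⁿ·Δ(t),
    i.e. a_{−m} = ε·a_{m−n} for all m. -/
theorem stmt19 (p q : ℤ) (hp : 1 < p) (hpodd : Odd p) (hqeven : Even q)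
    (hq1 : 0 < |q|) (hq2 : |q| < p) (hcop : IsCoprime p q) :
    ¬ ∃ (ε n : ℤ), (ε = 1 ∨ ε = -1) ∧ ∀ m : ℤ, aC p q (-m) = ε * aC p q (m - n) :=
  stmt19_general p q hp hpodd hqeven hcop
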